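/- arXiv:1711.04448 — 7 statements merged into one kernel-verified Lean document; each statement's English description precedes it below -/
import Mathlib

section
/- Let X be a compact metric space, G a topological group, H a syndetic subgroup of G, and φ : G × X → X a continuous action. Then φ is expansive if and only if the restricted action of H on X is expansive. -/
open scoped Pointwise

/-- For a continuous action of a topological group `G` on a compact metric space `X`
and a syndetic subgroup `H`, the action is expansive iff the restricted `H`-action is. -/
theorem expansive_iff_syndetic_subgroup_expansive
    {G : Type*} [Group G] [TopologicalSpace G] [IsTopologicalGroup G]
    {X : Type*} [MetricSpace X] [CompactSpace X]
    (φ : G → X → X)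
    (hone : ∀ x, φ 1 x = x)
    (hmul : ∀ g h x, φ (g * h) x = φ g (φ h x))
    (hcont : Continuous fun p : G × X => φ p.1 p.2)
    (H : Subgroup G)
    (hsyn : ∃ K : Set G, IsCompact K ∧ K * (H : Set G) = Set.univ) :
    (∃ c > 0, ∀ x y : X, x ≠ y → ∃ g : G, c < dist (φ g x) (φ g y)) ↔
      (∃ c > 0, ∀ x y : X, x ≠ y → ∃ h ∈ H, c < dist (φ h x) (φ h y)) := by
  have hinj : ∀ g : G, Function.Injective (φ g) := by
    intro g a b hab
    have : φ g⁻¹ (φ g a) = φ g⁻¹ (φ g b) := by rw [hab]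
    rwa [← hmul, ← hmul, inv_mul_cancel, hone, hone] at this
  constructor
  · rintro ⟨c, hc, hG⟩
    obtain ⟨K, hK, hKH⟩ := hsyn
    by_cases hnt : ∃ x y : X, x ≠ y
    swap
    · exact ⟨c, hc, fun x y hxy => absurd ⟨x, y, hxy⟩ hnt⟩
    -- the bad set
    set C : Set (G × X × X) :=
      (K ×ˢ (Set.univ ×ˢ Set.univ)) ∩
        {p : G × X × X | c ≤ dist (φ p.1 p.2.1) (φ p.1 p.2.2)} with hCdef
    have hCcomp : IsCompact C := by
      apply (hK.prod (isCompact_univ.prod isCompact_univ)).inter_right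
      apply isClosed_le continuous_const
      exact (hcont.comp (continuous_fst.prodMk (continuous_fst.comp continuous_snd))).dist
        (hcont.comp (continuous_fst.prodMk (continuous_snd.comp continuous_snd)))
    -- decompose an element of G as k * h
    have hdec : ∀ g : G, ∃ k ∈ K, ∃ h ∈ H, k * h = g := by
      intro g
      have : g ∈ K * (H : Set G) := by rw [hKH]; trivial
      simpa [Set.mem_mul] using this
    -- C is nonempty
    obtain ⟨x₀, y₀, hxy₀⟩ := hnt
    obtain ⟨g₀, hg₀⟩ := hG x₀ y₀ hxy₀
    obtain ⟨k₀, hk₀, h₀, hh₀, rfl⟩ := hdec g₀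
    have hCne : C.Nonempty := by
      refine ⟨(k₀, φ h₀ x₀, φ h₀ y₀), ⟨⟨hk₀, trivial, trivial⟩, ?_⟩⟩
      simp only [Set.mem_setOf_eq]
      have := hg₀
      simp only [hmul] at this
      exact this.le
    -- minimum of dist p.2.1 p.2.2 over C
    have hf : Continuous fun p : G × X × X => dist p.2.1 p.2.2 :=
      (continuous_fst.comp continuous_snd).dist (continuous_snd.comp continuous_snd)
    obtain ⟨p₀, hp₀, hmin⟩ := hCcomp.exists_isMinOn hCne hf.continuousOn
    set δ : ℝ := dist p₀.2.1 p₀.2.2 with hδdef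
    have hδpos : 0 < δ := by
      rcases hp₀ with ⟨-, hle⟩
      have hle' : c ≤ dist (φ p₀.1 p₀.2.1) (φ p₀.1 p₀.2.2) := hle
      have hne : p₀.2.1 ≠ p₀.2.2 := by
        intro h
        rw [h] at hle'
        simp at hle'
        exact absurd hle' (not_le.mpr hc)
      exact dist_pos.mpr hne
    refine ⟨δ / 2, by linarith, fun x y hxy => ?_⟩
    obtain ⟨g, hg⟩ := hG x y hxy
    obtain ⟨k, hk, h, hh, rfl⟩ := hdec g
    refine ⟨h, hh, ?_⟩
    have hmem : (k, φ h x, φ h y) ∈ C := by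
      refine ⟨⟨hk, trivial, trivial⟩, ?_⟩
      simp only [Set.mem_setOf_eq]
      simp only [hmul] at hg
      exact hg.le
    have := hmin hmem
    simp only [hδdef] at this ⊢
    calc dist p₀.2.1 p₀.2.2 / 2 < dist p₀.2.1 p₀.2.2 := by linarith
      _ ≤ dist (φ h x) (φ h y) := this
  · rintro ⟨c, hc, hH⟩
    refine ⟨c, hc, fun x y hxy => ?_⟩
    obtain ⟨h, -, hd⟩ := hH x y hxy
    exact ⟨h, hd⟩
end

section
/- Let X be a metric space satisfying Property P, G a countable group (e.g. finitely generated), and φ : G × X → X an expansive continuous action with expansive constant c. Then for every ε > 0 there exists a non-empty finite subset F ⊆ G such that whenever d(φ_g(x), φ_g(y)) < c for all g ∈ F, then d(x,y) < ε. -/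
/-- A metric space satisfies Property P if for every `ε > 0` there is a compact set `C`
with `{(x,y) : d(x,y) < ε} ∪ C × C = X × X`. -/
def PropertyP (X : Type*) [MetricSpace X] : Prop :=
  ∀ ε > (0 : ℝ), ∃ C : Set X, IsCompact C ∧
    {p : X × X | dist p.1 p.2 < ε} ∪ C ×ˢ C = Set.univ

/-- For an expansive continuous action with constant `c` of a countable group on a space
with Property P: for every `ε > 0` there is a nonempty finite `F ⊆ G` such that if
`d(φ_g x, φ_g y) < c` for all `g ∈ F`, then `d(x,y) < ε`. -/
theorem expansive_uniform_finite_set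
    {G : Type*} [Group G] [Countable G]
    {X : Type*} [MetricSpace X] (hP : PropertyP X)
    (φ : G → X → X)
    (hone : ∀ x, φ 1 x = x)
    (hmul : ∀ g h x, φ (g * h) x = φ g (φ h x))
    (hcont : ∀ g, Continuous (φ g))
    (c : ℝ) (hc : 0 < c)
    (hexp : ∀ x y : X, x ≠ y → ∃ g : G, c < dist (φ g x) (φ g y)) :
    ∀ ε > (0 : ℝ), ∃ F : Finset G, F.Nonempty ∧
      ∀ x y : X, (∀ g ∈ F, dist (φ g x) (φ g y) < c) → dist x y < ε := by
  intro ε hε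
  by_contra h
  push_neg at h
  classical
  obtain ⟨f, hf⟩ := exists_surjective_nat G
  have hFne : ∀ n : ℕ, ((Finset.range (n+1)).image f).Nonempty := fun n =>
    ⟨f 0, Finset.mem_image.2 ⟨0, Finset.mem_range.2 (Nat.succ_pos n), rfl⟩⟩
  choose x y hxy hdist using fun n => h ((Finset.range (n+1)).image f) (hFne n)
  obtain ⟨C, hC, hCU⟩ := hP ε hε
  have hmem : ∀ n, (x n, y n) ∈ C ×ˢ C := by
    intro n
    have : (x n, y n) ∈ ({p : X × X | dist p.1 p.2 < ε} ∪ C ×ˢ C) :=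
      hCU ▸ Set.mem_univ _
    rcases this with h1 | h2
    · exact absurd h1 (not_lt.2 (hdist n))
    · exact h2
  obtain ⟨⟨a, b⟩, hab, ψ, hmono, hlim⟩ := (hC.prod hC).tendsto_subseq hmem
  have hxa : Filter.Tendsto (fun k => x (ψ k)) Filter.atTop (nhds a) :=
    (Continuous.tendsto continuous_fst (a, b)).comp hlim
  have hyb : Filter.Tendsto (fun k => y (ψ k)) Filter.atTop (nhds b) :=
    (Continuous.tendsto continuous_snd (a, b)).comp hlim
  have hdab : ε ≤ dist a b :=
    ge_of_tendsto' (hxa.dist hyb) (fun k => hdist (ψ k))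
  have hne : a ≠ b := by
    intro hab'
    rw [hab', dist_self] at hdab
    linarith
  obtain ⟨g, hg⟩ := hexp a b hne
  obtain ⟨m, rfl⟩ := hf g
  have hlt : ∀ k, m ≤ k →
      dist (φ (f m) (x (ψ k))) (φ (f m) (y (ψ k))) < c := by
    intro k hk
    refine hxy (ψ k) (f m) ?_
    refine Finset.mem_image.2 ⟨m, Finset.mem_range.2 ?_, rfl⟩
    exact Nat.lt_succ_of_le (hk.trans hmono.le_apply)
  have htend : Filter.Tendsto
      (fun k => dist (φ (f m) (x (ψ k))) (φ (f m) (y (ψ k))))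
      Filter.atTop (nhds (dist (φ (f m) a) (φ (f m) b))) :=
    (((hcont (f m)).tendsto a).comp hxa).dist (((hcont (f m)).tendsto b).comp hyb)
  have hle : dist (φ (f m) a) (φ (f m) b) ≤ c :=
    le_of_tendsto htend (Filter.eventually_atTop.2 ⟨m, fun k hk => (hlt k hk).le⟩)
  linarith
end

section
/- Let X be a compact metric space and φ : G × X → X an expansive continuous action of a group G. If β is the least upper bound of the set of all expansive constants for φ, then β is not itself an expansive constant for φ. -/
/-- For an expansive continuous action on a compact metric space, the least upper bound
of the set of expansive constants is not itself an expansive constant. -/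
theorem lub_not_expansive_constant
    {G : Type*} [Group G] {X : Type*} [MetricSpace X] [CompactSpace X]
    (φ : G → X → X)
    (hone : ∀ x, φ 1 x = x)
    (hmul : ∀ g h x, φ (g * h) x = φ g (φ h x))
    (hcont : ∀ g, Continuous (φ g))
    (hexp : ∃ c : ℝ, c ∈ {c : ℝ | 0 < c ∧ ∀ x y : X, x ≠ y → ∃ g : G, c < dist (φ g x) (φ g y)})
    (β : ℝ)
    (hβ : IsLUB {c : ℝ | 0 < c ∧ ∀ x y : X, x ≠ y → ∃ g : G, c < dist (φ g x) (φ g y)} β) :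
    β ∉ {c : ℝ | 0 < c ∧ ∀ x y : X, x ≠ y → ∃ g : G, c < dist (φ g x) (φ g y)} := by
  rintro ⟨hβpos, hβexp⟩
  by_cases h : ∃ n : ℕ, β + 1/(n+1) ∈
      {c : ℝ | 0 < c ∧ ∀ x y : X, x ≠ y → ∃ g : G, c < dist (φ g x) (φ g y)}
  · obtain ⟨n, hn⟩ := h
    have h1 : (0:ℝ) < 1/((n:ℝ)+1) := by positivity
    linarith [hβ.1 hn]
  push_neg at h
  have key : ∀ n : ℕ, ∃ p : X × X, β < dist p.1 p.2 ∧
      ∀ g : G, dist (φ g p.1) (φ g p.2) ≤ β + 1/(n+1) := by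
    intro n
    have hn := h n
    have hpos : (0:ℝ) < β + 1/((n:ℝ)+1) := by positivity
    simp only [Set.mem_setOf_eq, not_and, not_forall] at hn
    obtain ⟨x, y, hxy, hle⟩ := hn hpos
    push_neg at hle
    obtain ⟨g, hg⟩ := hβexp x y hxy
    refine ⟨(φ g x, φ g y), hg, fun g' => ?_⟩
    rw [← hmul, ← hmul]
    exact hle (g' * g)
  choose u hu1 hu2 using key
  obtain ⟨p, -, ψ, hψ, hconv⟩ := isCompact_univ.tendsto_subseq (fun n => Set.mem_univ (u n))
  have hfst : Filter.Tendsto (fun n => (u (ψ n)).1) Filter.atTop (nhds p.1) :=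
    (continuous_fst.tendsto p).comp hconv
  have hsnd : Filter.Tendsto (fun n => (u (ψ n)).2) Filter.atTop (nhds p.2) :=
    (continuous_snd.tendsto p).comp hconv
  have hne : p.1 ≠ p.2 := by
    have hd : Filter.Tendsto (fun n => dist (u (ψ n)).1 (u (ψ n)).2) Filter.atTop
        (nhds (dist p.1 p.2)) := hfst.dist hsnd
    have hβd : β ≤ dist p.1 p.2 :=
      le_of_tendsto_of_tendsto' tendsto_const_nhds hd (fun n => (hu1 (ψ n)).le)
    intro heq
    rw [heq, dist_self] at hβd; linarith
  obtain ⟨g, hg⟩ := hβexp p.1 p.2 hne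
  have hle : dist (φ g p.1) (φ g p.2) ≤ β := by
    have hd : Filter.Tendsto (fun n => dist (φ g (u (ψ n)).1) (φ g (u (ψ n)).2)) Filter.atTop
        (nhds (dist (φ g p.1) (φ g p.2))) :=
      (((hcont g).tendsto _).comp hfst).dist (((hcont g).tendsto _).comp hsnd)
    have hbd : Filter.Tendsto (fun n : ℕ => β + 1/((ψ n : ℝ) + 1)) Filter.atTop (nhds β) := by
      have h0 : Filter.Tendsto (fun n : ℕ => (1:ℝ)/((ψ n : ℝ)+1)) Filter.atTop (nhds 0) :=
        tendsto_one_div_add_atTop_nhds_zero_nat.comp hψ.tendsto_atTop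
      simpa using tendsto_const_nhds.add h0
    exact le_of_tendsto_of_tendsto' hd hbd (fun n => hu2 (ψ n) g)
  linarith
end

section
/- Let (X,d) and (Y,ρ) be compact metric spaces, G a group, φ : G × X → X a continuous action, ψ : G × Y → Y an expansive continuous action, and f : X → Y a covering map with f ∘ φ_g = ψ_g ∘ f for all g ∈ G. Then φ is expansive. -/
/-- If `f : X → Y` is a covering map intertwining a continuous action `φ` on the compact
metric space `X` with an expansive continuous action `ψ` on the compact metric space `Y`,
then `φ` is expansive. -/
theorem expansive_of_covering_semiconjugacy
    {G : Type*} [Group G]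
    {X Y : Type*} [MetricSpace X] [CompactSpace X] [MetricSpace Y] [CompactSpace Y]
    (φ : G → X → X) (ψ : G → Y → Y)
    (hφone : ∀ x, φ 1 x = x) (hφmul : ∀ g h x, φ (g * h) x = φ g (φ h x))
    (hψone : ∀ y, ψ 1 y = y) (hψmul : ∀ g h y, ψ (g * h) y = ψ g (ψ h y))
    (hφcont : ∀ g, Continuous (φ g)) (hψcont : ∀ g, Continuous (ψ g))
    (hψexp : ∃ c > 0, ∀ y y' : Y, y ≠ y' → ∃ g : G, c < dist (ψ g y) (ψ g y'))
    (f : X → Y) (hf : IsCoveringMap f)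
    (hsemi : ∀ g x, f (φ g x) = ψ g (f x)) :
    ∃ c > 0, ∀ x y : X, x ≠ y → ∃ g : G, c < dist (φ g x) (φ g y) := by
  obtain ⟨c', hc', hexp⟩ := hψexp
  have hloc : IsLocalHomeomorph f := hf.isLocalHomeomorph
  choose e he hfe using hloc
  obtain ⟨β, hβ, hball⟩ := lebesgue_number_lemma_of_metric (isCompact_univ : IsCompact (Set.univ : Set X))
    (fun x => (e x).open_source) (fun x _ => Set.mem_iUnion.2 ⟨x, he x⟩)
  have hinj : ∀ a b : X, f a = f b → dist a b < β → a = b := by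
    intro a b hfab hd
    obtain ⟨i, hi⟩ := hball a (Set.mem_univ a)
    have ha : a ∈ (e i).source := hi (Metric.mem_ball_self hβ)
    have hb : b ∈ (e i).source := hi (by simpa [Metric.mem_ball, dist_comm] using hd)
    refine (e i).injOn ha hb ?_
    rw [← hfe i]; exact hfab
  have hfc : UniformContinuous f := CompactSpace.uniformContinuous_of_continuous hf.continuous
  obtain ⟨δ, hδ, hδ'⟩ := Metric.uniformContinuous_iff.mp hfc c' hc'
  refine ⟨min δ β / 2, by positivity, ?_⟩
  intro x y hxy
  have hhalf : min δ β / 2 < min δ β := half_lt_self (lt_min hδ hβ)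
  by_cases hfxy : f x = f y
  · refine ⟨1, ?_⟩
    have hβd : ¬ dist x y < β := fun h => hxy (hinj x y hfxy h)
    rw [hφone, hφone]
    exact lt_of_lt_of_le (lt_of_lt_of_le hhalf (min_le_right _ _)) (not_lt.mp hβd)
  · obtain ⟨g, hg⟩ := hexp (f x) (f y) hfxy
    refine ⟨g, ?_⟩
    have hg' : c' < dist (f (φ g x)) (f (φ g y)) := by rw [hsemi, hsemi]; exact hg
    have hδd : ¬ dist (φ g x) (φ g y) < δ := fun h => absurd (hδ' h) (not_lt.mpr hg'.le)
    exact lt_of_lt_of_le (lt_of_lt_of_le hhalf (min_le_left _ _)) (not_lt.mp hδd)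
end

section
/- Let (X,d) be a compact metric space and φ : G × X → X a continuous action of a group G. Then φ is orbit expansive if and only if φ is expansive. -/
/-- For a continuous action of a group on a compact metric space, orbit expansivity
is equivalent to expansivity. -/
theorem orbit_expansive_iff_expansive
    {G : Type*} [Group G] {X : Type*} [MetricSpace X] [CompactSpace X]
    (φ : G → X → X)
    (hone : ∀ x, φ 1 x = x)
    (hmul : ∀ g h x, φ (g * h) x = φ g (φ h x))
    (hcont : ∀ g, Continuous (φ g)) :
    (∃ 𝒰 : Finset (Set X), (∀ U ∈ 𝒰, IsOpen U) ∧ (⋃₀ (𝒰 : Set (Set X)) = Set.univ) ∧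
        ∀ x y : X, (∀ g : G, ∃ U ∈ 𝒰, φ g x ∈ U ∧ φ g y ∈ U) → x = y) ↔
      (∃ c > 0, ∀ x y : X, x ≠ y → ∃ g : G, c < dist (φ g x) (φ g y)) := by
  constructor
  · rintro ⟨𝒰, hopen, hcover, hsep⟩
    -- Lebesgue number for the cover
    obtain ⟨δ, hδ, hleb⟩ := lebesgue_number_lemma_of_metric (isCompact_univ (X := X))
      (c := fun U : 𝒰 => (U : Set X)) (fun U => hopen U U.2)
      (by
        intro x _
        have : x ∈ ⋃₀ (𝒰 : Set (Set X)) := by rw [hcover]; trivial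
        obtain ⟨U, hU, hxU⟩ := this
        exact Set.mem_iUnion.2 ⟨⟨U, hU⟩, hxU⟩)
    refine ⟨δ / 2, by linarith, fun x y hxy => ?_⟩
    by_contra h
    push_neg at h
    apply hxy
    apply hsep
    intro g
    obtain ⟨U, hU⟩ := hleb (φ g x) trivial
    refine ⟨U, U.2, hU (Metric.mem_ball_self hδ), hU ?_⟩
    have := h g
    simp only [Metric.mem_ball, dist_comm]
    linarith
  · rintro ⟨c, hc, hexp⟩
    -- finite subcover by balls of radius c/2
    obtain ⟨t, ht⟩ := isCompact_univ.elim_finite_subcover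
      (fun z : X => Metric.ball z (c / 2)) (fun z => Metric.isOpen_ball)
      (fun x _ => Set.mem_iUnion.2 ⟨x, Metric.mem_ball_self (by linarith)⟩)
    classical
    refine ⟨t.image (fun z => Metric.ball z (c / 2)), ?_, ?_, ?_⟩
    · intro U hU
      obtain ⟨z, _, rfl⟩ := Finset.mem_image.1 hU
      exact Metric.isOpen_ball
    · apply Set.eq_univ_of_univ_subset
      intro x _
      obtain ⟨s, hs⟩ := Set.mem_iUnion.1 (ht trivial)
      obtain ⟨hs1, hs2⟩ := Set.mem_iUnion.1 hs
      exact ⟨Metric.ball s (c / 2), by simpa using Finset.mem_image_of_mem _ hs1, hs2⟩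
    · intro x y hxy
      by_contra hne
      obtain ⟨g, hg⟩ := hexp x y hne
      obtain ⟨U, hU, hx, hy⟩ := hxy g
      obtain ⟨z, _, rfl⟩ := Finset.mem_image.1 hU
      rw [Metric.mem_ball] at hx hy
      have : dist (φ g x) (φ g y) < c := by
        have := dist_triangle (φ g x) z (φ g y)
        rw [dist_comm z (φ g y)] at this
        linarith
      linarith
end

section
/- If a topological space X admits an orbit expansive continuous action φ : G × X → X of some group G, then X is a T1 space. -/
/-- A topological space admitting an orbit expansive continuous action is T1. -/
theorem t1_of_orbit_expansive
    {G : Type*} [Group G] {X : Type*} [TopologicalSpace X]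
    (φ : G → X → X)
    (hone : ∀ x, φ 1 x = x)
    (hmul : ∀ g h x, φ (g * h) x = φ g (φ h x))
    (hcont : ∀ g, Continuous (φ g))
    (hOE : ∃ 𝒰 : Finset (Set X), (∀ U ∈ 𝒰, IsOpen U) ∧ (⋃₀ (𝒰 : Set (Set X)) = Set.univ) ∧
        ∀ x y : X, (∀ g : G, ∃ U ∈ 𝒰, φ g x ∈ U ∧ φ g y ∈ U) → x = y) :
    T1Space X := by
  obtain ⟨𝒰, hopen, hcover, hsep⟩ := hOE
  rw [t1Space_iff_exists_open]
  intro x y hxy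
  have h : ¬ ∀ g : G, ∃ U ∈ 𝒰, φ g x ∈ U ∧ φ g y ∈ U := fun h => hxy (hsep x y h)
  push_neg at h
  obtain ⟨g, hg⟩ := h
  have hx : φ g x ∈ ⋃₀ (𝒰 : Set (Set X)) := by rw [hcover]; trivial
  obtain ⟨U, hU, hxU⟩ := Set.mem_sUnion.mp hx
  refine ⟨φ g ⁻¹' U, (hopen U hU).preimage (hcont g), hxU, fun hyU => ?_⟩
  exact hg U hU hxU hyU
end

section
/- Let X be a topological space, G a group, H a finite index subgroup of G, and φ : G × X → X an orbit expansive action. Then the restricted action φ|_H : H × X → X is also orbit expansive. -/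
/-- If `H` is a finite index subgroup of `G` and the `G`-action `φ` is orbit expansive,
then the restricted `H`-action is orbit expansive. -/
theorem orbit_expansive_restrict_finite_index
    {G : Type*} [Group G] {X : Type*} [TopologicalSpace X]
    (φ : G → X → X)
    (hone : ∀ x, φ 1 x = x)
    (hmul : ∀ g h x, φ (g * h) x = φ g (φ h x))
    (hcont : ∀ g, Continuous (φ g))
    (H : Subgroup G) (hHfi : H.FiniteIndex)
    (hOE : ∃ 𝒰 : Finset (Set X), (∀ U ∈ 𝒰, IsOpen U) ∧ (⋃₀ (𝒰 : Set (Set X)) = Set.univ) ∧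
        ∀ x y : X, (∀ g : G, ∃ U ∈ 𝒰, φ g x ∈ U ∧ φ g y ∈ U) → x = y) :
    ∃ 𝒱 : Finset (Set X), (∀ V ∈ 𝒱, IsOpen V) ∧ (⋃₀ (𝒱 : Set (Set X)) = Set.univ) ∧
      ∀ x y : X, (∀ h ∈ H, ∃ V ∈ 𝒱, φ h x ∈ V ∧ φ h y ∈ V) → x = y := by
  obtain ⟨𝒰, hopen, hcov, hexp⟩ := hOE
  haveI : Finite (G ⧸ H) := H.finite_quotient_of_finiteIndex
  haveI : Fintype (G ⧸ H) := Fintype.ofFinite _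
  classical
  set R : G ⧸ H → G := fun q => Quotient.out q
  refine ⟨Finset.image (fun f : G ⧸ H → {U // U ∈ 𝒰} =>
      ⋂ q : G ⧸ H, (φ (R q)) ⁻¹' (f q : Set X)) Finset.univ, ?_, ?_, ?_⟩
  · intro V hV
    simp only [Finset.mem_image] at hV
    obtain ⟨f, -, rfl⟩ := hV
    exact isOpen_iInter_of_finite fun q => (hopen _ (f q).2).preimage (hcont _)
  · apply Set.eq_univ_of_forall
    intro x
    have hch : ∀ q : G ⧸ H, ∃ U : {U // U ∈ 𝒰}, φ (R q) x ∈ (U : Set X) := by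
      intro q
      have : φ (R q) x ∈ ⋃₀ (𝒰 : Set (Set X)) := by rw [hcov]; trivial
      obtain ⟨U, hU1, hU2⟩ := this
      exact ⟨⟨U, hU1⟩, hU2⟩
    choose f hf using hch
    refine ⟨⋂ q : G ⧸ H, (φ (R q)) ⁻¹' (f q : Set X), ?_, Set.mem_iInter.2 fun q => hf q⟩
    simp only [Finset.coe_image, Set.mem_image, Finset.mem_coe]
    exact ⟨f, by simp, rfl⟩
  · intro x y hxy
    apply hexp
    intro g
    set q : G ⧸ H := QuotientGroup.mk g
    have hmem : (R q)⁻¹ * g ∈ H := QuotientGroup.eq.mp (Quotient.out_eq' q)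
    obtain ⟨V, hV, hx, hy⟩ := hxy _ hmem
    simp only [Finset.mem_image] at hV
    obtain ⟨f, -, rfl⟩ := hV
    refine ⟨(f q : Set X), (f q).2, ?_, ?_⟩
    · have := Set.mem_iInter.1 hx q
      simp only [Set.mem_preimage] at this
      rwa [← hmul, mul_inv_cancel_left] at this
    · have := Set.mem_iInter.1 hy q
      simp only [Set.mem_preimage] at this
      rwa [← hmul, mul_inv_cancel_left] at this
end
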